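/- Let k be a field, and let A and B be finite-dimensional symmetric k-algebras. Let M be an A-B-bimodule inducing a separable equivalence between A and B. Let U be a finitely generated A-module and V a finitely generated B-module such that M*⊗_A U belongs to add(V) and M⊗_B V belongs to add(U). Then add(M⊗_B V) = add(U) and add(M*⊗_A U) = add(V). -/

import Mathlib

set_option linter.unusedSectionVars false

open TensorProduct MulOpposite

/-! ## A balanced tensor product over a (possibly noncommutative) `k`-algebra -/

/-- Scalar multiplication by `s' : S'` on `N`, as a `k`-linear map. -/
def smulAux (k : Type) [Field k] (N : Type) [AddCommGroup N] [Module k N]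
    (S' : Type) [Ring S'] [Module S' N] [SMulCommClass k S' N] (s' : S') : N →ₗ[k] N where
  toFun n := s' • n
  map_add' := smul_add s'
  map_smul' c n := (smul_comm c s' n).symm

section BalancedTensorProduct

variable (k : Type) [Field k]
variable (S : Type) [Ring S] [Algebra k S]
variable (R : Type) [Ring R]
variable (M : Type) [AddCommGroup M] [Module k M] [Module Sᵐᵒᵖ M] [Module R M]
  [SMulCommClass k R M] [SMulCommClass R Sᵐᵒᵖ M]
variable (N : Type) [AddCommGroup N] [Module k N] [Module S N]

/-- The submodule of `M ⊗[k] N` spanned by the differences `(m • s) ⊗ n - m ⊗ (s • n)`;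
since the set of these differences is stable under the action of `R` (which commutes with
the right `S`-action on `M`), this span coincides with the additive subgroup generated by
these differences, so the quotient below is the balanced tensor product `M ⊗[S] N`. -/
def balancedRel : Submodule R (M ⊗[k] N) :=
  Submodule.span R
    {z | ∃ (m : M) (s : S) (n : N), z = (op s • m) ⊗ₜ[k] n - m ⊗ₜ[k] (s • n)}

/-- The balanced tensor product `M ⊗[S] N` of a right `S`-module `M` and a left `S`-module
`N` over the `k`-algebra `S`, as a module over the ring `R` acting on `M` on the left
(commuting with the right `S`-action). -/
def BalancedTensor : Type := (M ⊗[k] N) ⧸ balancedRel k S R M N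

noncomputable instance : AddCommGroup (BalancedTensor k S R M N) :=
  inferInstanceAs (AddCommGroup ((M ⊗[k] N) ⧸ balancedRel k S R M N))

noncomputable instance : Module R (BalancedTensor k S R M N) :=
  inferInstanceAs (Module R ((M ⊗[k] N) ⧸ balancedRel k S R M N))

section RightAction

variable (S' : Type) [Ring S'] [Module S' N] [SMulCommClass S S' N] [SMulCommClass k S' N]

/-- Scalar multiplication by `s' : S'` on the second factor of `M ⊗[k] N`,
as an `R`-linear map. -/
noncomputable def rightSmulTensor (s' : S') : (M ⊗[k] N) →ₗ[R] (M ⊗[k] N) where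
  toFun := TensorProduct.map LinearMap.id (smulAux k N S' s')
  map_add' := map_add _
  map_smul' r z := by
    induction z using TensorProduct.induction_on with
    | zero => simp
    | tmul m n => simp [TensorProduct.smul_tmul']
    | add x y hx hy => simp only [map_add, smul_add, RingHom.id_apply] at hx hy ⊢; rw [hx, hy]

@[simp] lemma rightSmulTensor_tmul (s' : S') (m : M) (n : N) :
    rightSmulTensor k R M N S' s' (m ⊗ₜ[k] n) = m ⊗ₜ[k] (s' • n) := by
  simp [rightSmulTensor, smulAux]

lemma rightSmulTensor_le (s' : S') :
    balancedRel k S R M N ≤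
      Submodule.comap (rightSmulTensor k R M N S' s') (balancedRel k S R M N) := by
  rw [balancedRel, Submodule.span_le]
  rintro z ⟨m, s, n, rfl⟩
  simp only [SetLike.mem_coe, Submodule.mem_comap, map_sub, rightSmulTensor_tmul]
  rw [← smul_comm s s' n]
  exact Submodule.subset_span ⟨m, s, s' • n, rfl⟩

/-- Scalar multiplication by `s' : S'` on the balanced tensor product. -/
noncomputable def rightSmulQ (s' : S') :
    BalancedTensor k S R M N →ₗ[R] BalancedTensor k S R M N :=
  Submodule.mapQ _ _ (rightSmulTensor k R M N S' s') (rightSmulTensor_le k S R M N S' s')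

lemma rightSmulQ_mk (s' : S') (z : M ⊗[k] N) :
    rightSmulQ k S R M N S' s' (Submodule.Quotient.mk z) =
      Submodule.Quotient.mk (rightSmulTensor k R M N S' s' z) :=
  Submodule.mapQ_apply _ _ _ z

/-- The action of a ring `S'`, acting on `N` compatibly with the `S`-action, on the
balanced tensor product `M ⊗[S] N`.  (For `S' = S''ᵐᵒᵖ` with `S''` acting on the right of
`N`, this is the right `S''`-module structure on `M ⊗[S] N`.) -/
noncomputable instance : Module S' (BalancedTensor k S R M N) where
  smul s' x := rightSmulQ k S R M N S' s' x
  one_smul x := by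
    obtain ⟨z, rfl⟩ := Submodule.Quotient.mk_surjective _ x
    show rightSmulQ k S R M N S' 1 _ = _
    rw [rightSmulQ_mk]
    congr 1
    induction z using TensorProduct.induction_on with
    | zero => simp
    | tmul m n => simp
    | add x y hx hy => rw [map_add, hx, hy]
  mul_smul s' t' x := by
    obtain ⟨z, rfl⟩ := Submodule.Quotient.mk_surjective _ x
    show rightSmulQ k S R M N S' (s' * t') _ =
      rightSmulQ k S R M N S' s' (rightSmulQ k S R M N S' t' _)
    rw [rightSmulQ_mk, rightSmulQ_mk, rightSmulQ_mk]
    congr 1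
    induction z using TensorProduct.induction_on with
    | zero => simp
    | tmul m n => simp [mul_smul]
    | add x y hx hy => simp only [map_add]; rw [hx, hy]
  smul_zero s' := map_zero (rightSmulQ k S R M N S' s')
  smul_add s' x y := map_add (rightSmulQ k S R M N S' s') x y
  add_smul s' t' x := by
    obtain ⟨z, rfl⟩ := Submodule.Quotient.mk_surjective _ x
    show rightSmulQ k S R M N S' (s' + t') _ =
      rightSmulQ k S R M N S' s' _ + rightSmulQ k S R M N S' t' _
    rw [rightSmulQ_mk, rightSmulQ_mk, rightSmulQ_mk]
    erw [← Submodule.Quotient.mk_add]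
    congr 1
    induction z using TensorProduct.induction_on with
    | zero => simp
    | tmul m n => simp [add_smul, TensorProduct.tmul_add]
    | add x y hx hy => simp only [map_add] at hx hy ⊢; rw [hx, hy]; abel
  zero_smul x := by
    obtain ⟨z, rfl⟩ := Submodule.Quotient.mk_surjective _ x
    show rightSmulQ k S R M N S' 0 _ = _
    rw [rightSmulQ_mk]
    rw [show rightSmulTensor k R M N S' 0 z = 0 by
      induction z using TensorProduct.induction_on with
      | zero => simp
      | tmul m n => simp
      | add x y hx hy => rw [map_add, hx, hy, add_zero]]
    exact Submodule.Quotient.mk_zero _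

end RightAction

end BalancedTensorProduct

/-! ## The `k`-dual of a bimodule -/

section DualBimodule

variable (k : Type) [Field k]
variable (A : Type) [Ring A]
variable (B : Type) [Ring B]
variable (M : Type) [AddCommGroup M] [Module k M] [Module A M] [Module Bᵐᵒᵖ M]
  [SMulCommClass k A M] [SMulCommClass k Bᵐᵒᵖ M] [SMulCommClass A Bᵐᵒᵖ M]

/-- The left `B`-module structure on the `k`-dual `M* = Hom_k(M, k)` of a right `B`-module
`M`, given by `(b • f) m = f (m • b)`. -/
noncomputable instance dualLeftModule : Module B (M →ₗ[k] k) where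
  smul b f := f.comp (smulAux k M Bᵐᵒᵖ (op b))
  one_smul f := by
    ext m
    show f (op (1 : B) • m) = f m
    rw [op_one, one_smul]
  mul_smul b c f := by
    ext m
    show f (op (b * c) • m) = f (op c • op b • m)
    rw [op_mul, mul_smul]
  smul_zero b := by ext m; rfl
  smul_add b f g := by ext m; rfl
  add_smul b c f := by
    ext m
    show f (op (b + c) • m) = f (op b • m) + f (op c • m)
    rw [op_add, add_smul, map_add]
  zero_smul f := by
    ext m
    show f (op (0 : B) • m) = 0
    rw [op_zero, zero_smul, map_zero]

lemma dual_left_smul_apply (b : B) (f : M →ₗ[k] k) (m : M) :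
    (b • f) m = f (op b • m) := rfl

/-- The right `A`-module structure on the `k`-dual `M* = Hom_k(M, k)` of a left `A`-module
`M`, given by `(f • a) m = f (a • m)`, encoded as a left `Aᵐᵒᵖ`-module structure. -/
noncomputable instance dualRightModule : Module Aᵐᵒᵖ (M →ₗ[k] k) where
  smul x f := f.comp (smulAux k M A x.unop)
  one_smul f := by
    ext m
    show f ((1 : Aᵐᵒᵖ).unop • m) = f m
    rw [unop_one, one_smul]
  mul_smul x y f := by
    ext m
    show f ((x * y).unop • m) = f (y.unop • x.unop • m)
    rw [unop_mul, mul_smul]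
  smul_zero x := by ext m; rfl
  smul_add x f g := by ext m; rfl
  add_smul x y f := by
    ext m
    show f ((x + y).unop • m) = f (x.unop • m) + f (y.unop • m)
    rw [unop_add, add_smul, map_add]
  zero_smul f := by
    ext m
    show f ((0 : Aᵐᵒᵖ).unop • m) = 0
    rw [unop_zero, zero_smul, map_zero]

lemma dual_right_smul_apply (x : Aᵐᵒᵖ) (f : M →ₗ[k] k) (m : M) :
    (x • f) m = f (x.unop • m) := rfl

instance : SMulCommClass B Aᵐᵒᵖ (M →ₗ[k] k) where
  smul_comm b x f := by
    ext m
    show f (x.unop • op b • m) = f (op b • x.unop • m)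
    rw [smul_comm]

instance : SMulCommClass k B (M →ₗ[k] k) where
  smul_comm c b f := by
    ext m
    show c • f (op b • m) = c • f (op b • m)
    rfl

instance : SMulCommClass k Aᵐᵒᵖ (M →ₗ[k] k) where
  smul_comm c x f := by
    ext m
    show c • f (x.unop • m) = c • f (x.unop • m)
    rfl

end DualBimodule

/-! ## Symmetric algebras, `add`, and dominant dimension -/

/-- A finite-dimensional `k`-algebra `A` is symmetric if `A` is isomorphic to its `k`-dual
`A* = Hom_k(A,k)` as an `A`-`A`-bimodule, where the bimodule structure on `A*` is given by
`(a • f • b) (y) = f (b * y * a)`. -/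
def IsSymmetricKAlgebra (k A : Type) [Field k] [Ring A] [Algebra k A] : Prop :=
  ∃ e : A ≃ₗ[k] (A →ₗ[k] k), ∀ a x b y : A, e (a * x * b) y = e x (b * y * a)

/-- `X` belongs to `add Y`: `X` is isomorphic to a direct summand of a finite direct sum of
copies of the `R`-module `Y`. -/
def MemAdd (R : Type) [Ring R] (X : Type) [AddCommGroup X] [Module R X]
    (Y : Type) [AddCommGroup Y] [Module R Y] : Prop :=
  ∃ (n : ℕ) (f : X →ₗ[R] (Fin n → Y)) (g : (Fin n → Y) →ₗ[R] X), g.comp f = LinearMap.id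

/-- `R` admits an injective resolution `0 → R → I⁰ → I¹ → ⋯` of `R` as a right `R`-module
(i.e. as a module over `Rᵐᵒᵖ`) whose first `d` terms `I⁰, …, I^{d-1}` are projective.
The dominant dimension of `R` is the largest such `d`. -/
def HasInjectiveResolutionWithProjectivePrefix (R : Type) [Ring R] (d : ℕ) : Prop :=
  ∃ (I : ℕ → ModuleCat.{0} Rᵐᵒᵖ) (f₀ : R →ₗ[Rᵐᵒᵖ] I 0)
    (f : ∀ n : ℕ, (I n : Type) →ₗ[Rᵐᵒᵖ] I (n + 1)),
      Function.Injective f₀ ∧ Function.Exact f₀ (f 0) ∧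
      (∀ n : ℕ, Function.Exact (f n) (f (n + 1))) ∧
      (∀ n : ℕ, Module.Injective Rᵐᵒᵖ (I n)) ∧
      (∀ n : ℕ, n < d → Module.Projective Rᵐᵒᵖ (I n))

/-!
Separability makes `U` a direct summand of `M ⊗_B (M* ⊗_A U)`: the image `e ∈ M ⊗_B M*` of
`1 ∈ A` is central, so `u ↦ e ⊗ u` is `A`-linear, and the bimodule retraction
`g : M ⊗_B M* → A` yields the contraction `m ⊗ (φ ⊗ u) ↦ g (m ⊗ φ) • u`, a left inverse of it
because `g e = 1`. As `M ⊗_B -` preserves `add`, the hypothesis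
`M* ⊗_A U ∈ add V` then gives `U ∈ add (M ⊗_B V)`, and together with `M ⊗_B V ∈ add U` this
identifies the two classes. The statement about `V` is the same argument with the roles of
`A` and `B` exchanged.
-/

instance {k B M : Type} [Field k] [Ring B] [Algebra k B] [AddCommGroup M] [Module k M]
    [Module Bᵐᵒᵖ M] [IsScalarTower k Bᵐᵒᵖ M] : IsScalarTower k B (M →ₗ[k] k) where
  smul_assoc c b f := by
    ext m
    rw [dual_left_smul_apply, op_smul, smul_assoc, map_smul, LinearMap.smul_apply,
      dual_left_smul_apply]

namespace BalancedTensor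

section Basic

variable {k S R M N : Type} [Field k] [Ring S] [Algebra k S] [Ring R]
  [AddCommGroup M] [Module k M] [Module Sᵐᵒᵖ M] [Module R M]
  [SMulCommClass k R M] [SMulCommClass R Sᵐᵒᵖ M]
  [AddCommGroup N] [Module k N] [Module S N]

noncomputable def tmul (m : M) (n : N) : BalancedTensor k S R M N :=
  Submodule.Quotient.mk (m ⊗ₜ[k] n)

lemma tmul_add (m : M) (n n' : N) :
    (tmul m (n + n') : BalancedTensor k S R M N) = tmul m n + tmul m n' := by
  rw [tmul, TensorProduct.tmul_add]; rfl

lemma add_tmul (m m' : M) (n : N) :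
    (tmul (m + m') n : BalancedTensor k S R M N) = tmul m n + tmul m' n := by
  rw [tmul, TensorProduct.add_tmul]; rfl

lemma smul_tmul (c : k) (m : M) (n : N) :
    (tmul (c • m) n : BalancedTensor k S R M N) = tmul m (c • n) := by
  rw [tmul, TensorProduct.smul_tmul]; rfl

lemma smul_tmul' (r : R) (m : M) (n : N) :
    r • (tmul m n : BalancedTensor k S R M N) = tmul (r • m) n := by
  rw [tmul, tmul, ← TensorProduct.smul_tmul']; rfl

lemma op_smul_tmul (s : S) (m : M) (n : N) :
    (tmul (op s • m) n : BalancedTensor k S R M N) = tmul m (s • n) :=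
  (Submodule.Quotient.eq _).mpr (Submodule.subset_span ⟨m, s, n, rfl⟩)

lemma tmul_smul {S' : Type} [Ring S'] [Module S' N] [SMulCommClass S S' N]
    [SMulCommClass k S' N] (s' : S') (m : M) (n : N) :
    (tmul m (s' • n) : BalancedTensor k S R M N) = s' • tmul m n := by
  show _ = rightSmulQ k S R M N S' s' (Submodule.Quotient.mk _)
  rw [rightSmulQ_mk, rightSmulTensor_tmul]; rfl

@[elab_as_elim]
theorem induction_on {C : BalancedTensor k S R M N → Prop} (t : BalancedTensor k S R M N)
    (zero : C 0) (tmul : ∀ m n, C (tmul m n)) (add : ∀ x y, C x → C y → C (x + y)) : C t := by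
  obtain ⟨z, rfl⟩ := Submodule.Quotient.mk_surjective _ t
  induction z using TensorProduct.induction_on with
  | zero => exact zero
  | tmul m n => exact tmul m n
  | add x y hx hy => exact add _ _ hx hy

noncomputable def tmulAddHom : M →+ N →+ BalancedTensor k S R M N :=
  AddMonoidHom.mk' (fun m => AddMonoidHom.mk' (tmul m) (tmul_add m))
    fun m m' => AddMonoidHom.ext (add_tmul m m')

lemma tmul_sum {ι : Type} (s : Finset ι) (m : M) (n : ι → N) :
    (tmul m (∑ i ∈ s, n i) : BalancedTensor k S R M N) = ∑ i ∈ s, tmul m (n i) :=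
  map_sum (tmulAddHom m) n s

variable {X : Type} [AddCommGroup X]

noncomputable def liftAddHom (f : M →+ N →+ X)
    (hk : ∀ (c : k) m n, f (c • m) n = f m (c • n))
    (hS : ∀ (s : S) m n, f (op s • m) n = f m (s • n)) : BalancedTensor k S R M N →+ X :=
  QuotientAddGroup.lift (balancedRel k S R M N).toAddSubgroup (TensorProduct.liftAddHom f hk) <| by
    intro x hx
    -- the kernel of an additive map need not be an `R`-submodule, so carry all `R`-multiples
    suffices ∀ r : R, TensorProduct.liftAddHom f hk (r • x) = 0 by simpa using this 1
    induction hx using Submodule.span_induction with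
    | mem z hz =>
      obtain ⟨m, s, n, rfl⟩ := hz
      intro r
      rw [smul_sub, TensorProduct.smul_tmul', TensorProduct.smul_tmul', smul_comm r (op s) m,
        map_sub, TensorProduct.liftAddHom_tmul, TensorProduct.liftAddHom_tmul, hS, sub_self]
    | zero => simp
    | add x y _ _ hx hy => intro r; rw [smul_add, map_add, hx, hy, add_zero]
    | smul a x _ hx => intro r; rw [smul_smul, hx]

@[simp] lemma liftAddHom_tmul (f : M →+ N →+ X) (hk : ∀ (c : k) m n, f (c • m) n = f m (c • n))
    (hS : ∀ (s : S) m n, f (op s • m) n = f m (s • n)) (m : M) (n : N) :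
    liftAddHom (R := R) f hk hS (tmul m n) = f m n := rfl

noncomputable def lift [Module R X] (f : M →+ N →+ X)
    (hk : ∀ (c : k) m n, f (c • m) n = f m (c • n))
    (hS : ∀ (s : S) m n, f (op s • m) n = f m (s • n))
    (hR : ∀ (r : R) m n, f (r • m) n = r • f m n) : BalancedTensor k S R M N →ₗ[R] X where
  __ := liftAddHom f hk hS
  map_smul' r t := by
    induction t using induction_on with
    | zero => simp
    | tmul m n => simp [smul_tmul', hR]
    | add x y hx hy => simp_all [smul_add]

instance [Algebra k R] [IsScalarTower k R M] [IsScalarTower k S N] :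
    IsScalarTower k R (BalancedTensor k S R M N) where
  smul_assoc c r t := by
    induction t using induction_on with
    | zero => simp
    | tmul m n => rw [smul_tmul', smul_tmul', ← tmul_smul, ← smul_tmul, smul_assoc]
    | add x y hx hy => simp only [smul_add, hx, hy]

variable {N' : Type} [AddCommGroup N'] [Module k N'] [Module S N']

noncomputable def mapRight [IsScalarTower k S N] [IsScalarTower k S N'] (g : N →ₗ[S] N') :
    BalancedTensor k S R M N →ₗ[R] BalancedTensor k S R M N' :=
  lift (tmulAddHom.compl₂ g.toAddMonoidHom)
    (fun c m n => by simp [tmulAddHom, smul_tmul])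
    (fun s m n => by simp [tmulAddHom, op_smul_tmul])
    (fun r m n => by simp [tmulAddHom, ← smul_tmul'])

@[simp] lemma mapRight_tmul [IsScalarTower k S N] [IsScalarTower k S N'] (g : N →ₗ[S] N')
    (m : M) (n : N) : (mapRight g (tmul m n : BalancedTensor k S R M N)) = tmul m (g n) := rfl

end Basic

end BalancedTensor

section MemAdd

variable {R X Y Z : Type} [Ring R] [AddCommGroup X] [Module R X] [AddCommGroup Y] [Module R Y]
  [AddCommGroup Z] [Module R Z]

lemma memAdd_of_comp_eq_id (f : X →ₗ[R] Y) (g : Y →ₗ[R] X) (h : g ∘ₗ f = LinearMap.id) :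
    MemAdd R X Y :=
  ⟨1, LinearMap.pi fun _ => f, g ∘ₗ LinearMap.proj 0, by ext x; exact LinearMap.congr_fun h x⟩

lemma MemAdd.trans (hXY : MemAdd R X Y) (hYZ : MemAdd R Y Z) : MemAdd R X Z := by
  obtain ⟨n, f, g, hgf⟩ := hXY
  obtain ⟨m, f', g', hgf'⟩ := hYZ
  let e : (Fin n → Fin m → Z) ≃ₗ[R] (Fin (n * m) → Z) :=
    (LinearEquiv.curry R Z (Fin n) (Fin m)).symm ≪≫ₗ
      LinearEquiv.funCongrLeft R Z finProdFinEquiv.symm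
  refine ⟨n * m, e ∘ₗ LinearMap.pi (fun i => f' ∘ₗ LinearMap.proj i) ∘ₗ f,
    g ∘ₗ LinearMap.pi (fun i => g' ∘ₗ LinearMap.proj i) ∘ₗ e.symm.toLinearMap, ?_⟩
  have hgf'_pi : ∀ y : Fin n → Y, LinearMap.pi (fun i => g' ∘ₗ LinearMap.proj i)
      (LinearMap.pi (fun i => f' ∘ₗ LinearMap.proj i) y) = y :=
    fun y => funext fun i => LinearMap.congr_fun hgf' (y i)
  ext x
  simpa [hgf'_pi] using LinearMap.congr_fun hgf x

end MemAdd

open BalancedTensor in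
theorem MemAdd.balancedTensor {k S R M X Y : Type} [Field k] [Ring S] [Algebra k S] [Ring R]
    [AddCommGroup M] [Module k M] [Module Sᵐᵒᵖ M] [Module R M]
    [SMulCommClass k R M] [SMulCommClass R Sᵐᵒᵖ M]
    [AddCommGroup X] [Module k X] [Module S X] [IsScalarTower k S X]
    [AddCommGroup Y] [Module k Y] [Module S Y] [IsScalarTower k S Y]
    (h : MemAdd S X Y) : MemAdd R (BalancedTensor k S R M X) (BalancedTensor k S R M Y) := by
  obtain ⟨n, f, g, hgf⟩ := h
  refine ⟨n, LinearMap.pi fun i => mapRight (LinearMap.proj i ∘ₗ f),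
    ∑ i, mapRight (g ∘ₗ LinearMap.single S (fun _ => Y) i) ∘ₗ LinearMap.proj i, ?_⟩
  ext t
  induction t using induction_on with
  | zero => simp
  | tmul m x =>
    have hx : ∑ i, g (Pi.single i (f x i)) = x := by
      rw [← map_sum, Finset.univ_sum_single]; exact LinearMap.congr_fun hgf x
    simp [← BalancedTensor.tmul_sum, hx]
  | add x y hx hy => simp_all [Finset.sum_add_distrib]

namespace BalancedTensor

variable {k A B P Q U : Type} [Field k] [Ring A] [Algebra k A] [Ring B] [Algebra k B]
  [AddCommGroup P] [Module k P] [Module A P] [Module Bᵐᵒᵖ P]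
  [IsScalarTower k A P] [SMulCommClass A Bᵐᵒᵖ P]
  [AddCommGroup Q] [Module k Q] [Module B Q] [Module Aᵐᵒᵖ Q]
  [IsScalarTower k B Q] [SMulCommClass k Aᵐᵒᵖ Q] [SMulCommClass B Aᵐᵒᵖ Q]
  [AddCommGroup U] [Module k U] [Module A U] [IsScalarTower k A U]

noncomputable def tmulRight (u : U) : Q →ₗ[B] BalancedTensor k A B Q U where
  toFun φ := tmul φ u
  map_add' φ φ' := add_tmul φ φ' u
  map_smul' b φ := (smul_tmul' b φ u).symm

noncomputable def assocTmul (u : U) :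
    BalancedTensor k B A P Q →ₗ[A] BalancedTensor k B A P (BalancedTensor k A B Q U) :=
  mapRight (tmulRight u)

@[simp] lemma assocTmul_tmul (u : U) (m : P) (φ : Q) :
    assocTmul u (tmul m φ) = (tmul m (tmul φ u) : BalancedTensor k B A P _) := rfl

lemma assocTmul_add (u u' : U) (t : BalancedTensor k B A P Q) :
    assocTmul (u + u') t = assocTmul u t + assocTmul u' t := by
  induction t using induction_on with
  | zero => simp
  | tmul m φ => simp [← tmul_add]
  | add x y hx hy => simp only [map_add, hx, hy]; abel

lemma assocTmul_smul (a : A) (u : U) (t : BalancedTensor k B A P Q) :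
    assocTmul (a • u) t = assocTmul u (op a • t) := by
  induction t using induction_on with
  | zero => simp
  | tmul m φ => rw [← tmul_smul, assocTmul_tmul, assocTmul_tmul, op_smul_tmul]
  | add x y hx hy => simp only [map_add, smul_add, hx, hy]

variable (g : BalancedTensor k B A P Q →ₗ[A] A)

lemma apply_tmul_smul_smul (c : k) (m : P) (φ : Q) (u : U) :
    g (tmul m (c • φ)) • u = g (tmul m φ) • c • u := by
  rw [← smul_tmul, ← algebraMap_smul A c m, ← smul_tmul', map_smul, smul_eq_mul, mul_smul,
    algebraMap_smul, smul_comm]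

noncomputable def contractLeft (hg : ∀ t (a : A), g (op a • t) = g t * a) (m : P) :
    BalancedTensor k A B Q U →+ U :=
  liftAddHom ((smulAddHom A U).comp (g.toAddMonoidHom.comp (tmulAddHom m)))
    (fun c φ u => apply_tmul_smul_smul g c m φ u)
    (fun a φ u => by
      simp only [tmulAddHom, AddMonoidHom.comp_apply, LinearMap.toAddMonoidHom_coe,
        smulAddHom_apply, AddMonoidHom.mk'_apply]
      rw [tmul_smul, hg, mul_smul])

variable (hg : ∀ t (a : A), g (op a • t) = g t * a)

@[simp] lemma contractLeft_tmul (m : P) (φ : Q) (u : U) :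
    contractLeft g hg m (tmul φ u) = g (tmul m φ) • u := rfl

noncomputable def contract :
    BalancedTensor k B A P (BalancedTensor k A B Q U) →ₗ[A] U :=
  lift (AddMonoidHom.mk' (contractLeft g hg) fun m m' => by
      ext t
      induction t using induction_on with
      | zero => simp
      | tmul φ u => simp [add_tmul, add_smul]
      | add x y hx hy => simp_all; abel)
    (fun c m t => by
      induction t using induction_on with
      | zero => simp
      | tmul φ u => simp [← tmul_smul, smul_tmul, apply_tmul_smul_smul]
      | add x y hx hy => simp_all)
    (fun b m t => by
      induction t using induction_on with
      | zero => simp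
      | tmul φ u => simp [smul_tmul', op_smul_tmul]
      | add x y hx hy => simp_all)
    (fun a m t => by
      induction t using induction_on with
      | zero => simp
      | tmul φ u => simp [← smul_tmul', mul_smul]
      | add x y hx hy => simp_all)

lemma contract_assocTmul (u : U) (t : BalancedTensor k B A P Q) :
    contract g hg (assocTmul u t) = g t • u := by
  induction t using induction_on with
  | zero => simp
  | tmul m φ => rfl
  | add x y hx hy => simp only [map_add, hx, hy, add_smul]

end BalancedTensor

open BalancedTensor in
theorem memAdd_balancedTensor_balancedTensor {k A B P Q : Type} [Field k] [Ring A] [Algebra k A]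
    [Ring B] [Algebra k B]
    [AddCommGroup P] [Module k P] [Module A P] [Module Bᵐᵒᵖ P]
    [IsScalarTower k A P] [SMulCommClass A Bᵐᵒᵖ P]
    [AddCommGroup Q] [Module k Q] [Module B Q] [Module Aᵐᵒᵖ Q]
    [IsScalarTower k B Q] [SMulCommClass k Aᵐᵒᵖ Q] [SMulCommClass B Aᵐᵒᵖ Q]
    (f : A →ₗ[A] BalancedTensor k B A P Q) (g : BalancedTensor k B A P Q →ₗ[A] A)
    (hf : ∀ x a : A, f (x * a) = op a • f x) (hg : ∀ t (a : A), g (op a • t) = g t * a)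
    (hgf : g ∘ₗ f = LinearMap.id)
    (U : Type) [AddCommGroup U] [Module k U] [Module A U] [IsScalarTower k A U] :
    MemAdd A U (BalancedTensor k B A P (BalancedTensor k A B Q U)) := by
  have hcentral : ∀ a : A, op a • f 1 = a • f 1 := fun a => by
    rw [← hf, ← map_smul, smul_eq_mul, mul_one, one_mul]
  let embed : U →ₗ[A] BalancedTensor k B A P (BalancedTensor k A B Q U) :=
    { toFun u := assocTmul u (f 1)
      map_add' u u' := assocTmul_add u u' (f 1)
      map_smul' a u := by rw [RingHom.id_apply, assocTmul_smul, hcentral, map_smul] }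
  refine memAdd_of_comp_eq_id embed (contract g hg) (LinearMap.ext fun u => ?_)
  change contract g hg (assocTmul u (f 1)) = u
  rw [contract_assocTmul, ← LinearMap.comp_apply, hgf, LinearMap.id_apply, one_smul]

theorem add_balancedTensor_eq_of_separableEquivalence_general
    (k : Type) [Field k]
    (A : Type) [Ring A] [Algebra k A]
    (B : Type) [Ring B] [Algebra k B]
    -- `M` is an `A`-`B`-bimodule, finitely generated projective on either side
    (M : Type) [AddCommGroup M] [Module k M] [Module A M] [Module Bᵐᵒᵖ M]
    [IsScalarTower k A M] [IsScalarTower k Bᵐᵒᵖ M] [SMulCommClass A Bᵐᵒᵖ M]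
    -- `A` is a direct summand of `M ⊗_B M*` as an `A`-`A`-bimodule
    (hsepA : ∃ (f : A →ₗ[A] BalancedTensor k B A M (M →ₗ[k] k))
       (g : BalancedTensor k B A M (M →ₗ[k] k) →ₗ[A] A),
         (∀ (x a : A), f (x * a) = op a • f x) ∧
         (∀ (t : BalancedTensor k B A M (M →ₗ[k] k)) (a : A), g (op a • t) = g t * a) ∧
         g.comp f = LinearMap.id)
    -- `B` is a direct summand of `M* ⊗_A M` as a `B`-`B`-bimodule
    (hsepB : ∃ (f : B →ₗ[B] BalancedTensor k A B (M →ₗ[k] k) M)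
       (g : BalancedTensor k A B (M →ₗ[k] k) M →ₗ[B] B),
         (∀ (x b : B), f (x * b) = op b • f x) ∧
         (∀ (t : BalancedTensor k A B (M →ₗ[k] k) M) (b : B), g (op b • t) = g t * b) ∧
         g.comp f = LinearMap.id)
    -- `U` is a finitely generated `A`-module with `A` as a direct summand
    (U : Type) [AddCommGroup U] [Module k U] [Module A U] [IsScalarTower k A U]
    -- `V` is a finitely generated `B`-module with `B` as a direct summand
    (V : Type) [AddCommGroup V] [Module k V] [Module B V] [IsScalarTower k B V]
    -- `M* ⊗_A U ∈ add V` and `M ⊗_B V ∈ add U`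
    (hMU : MemAdd B (BalancedTensor k A B (M →ₗ[k] k) U) V)
    (hMV : MemAdd A (BalancedTensor k B A M V) U) :
    (∀ (X : Type) [AddCommGroup X] [Module A X],
        MemAdd A X (BalancedTensor k B A M V) ↔ MemAdd A X U) ∧
    (∀ (X : Type) [AddCommGroup X] [Module B X],
        MemAdd B X (BalancedTensor k A B (M →ₗ[k] k) U) ↔ MemAdd B X V) := by
  obtain ⟨fA, gA, hfA, hgA, hgfA⟩ := hsepA
  obtain ⟨fB, gB, hfB, hgB, hgfB⟩ := hsepB
  have hU : MemAdd A U (BalancedTensor k B A M V) :=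
    (memAdd_balancedTensor_balancedTensor fA gA hfA hgA hgfA U).trans hMU.balancedTensor
  have hV : MemAdd B V (BalancedTensor k A B (M →ₗ[k] k) U) :=
    (memAdd_balancedTensor_balancedTensor fB gB hfB hgB hgfB V).trans hMV.balancedTensor
  exact ⟨fun X _ _ => ⟨(·.trans hMV), (·.trans hU)⟩, fun X _ _ => ⟨(·.trans hMU), (·.trans hV)⟩⟩

/-- Let `A`, `B` be finite-dimensional symmetric `k`-algebras and let `M` be an
`A`-`B`-bimodule inducing a separable equivalence between `A` and `B`.  Let `U` be a
finitely generated `A`-module and `V` a finitely generated `B`-module such that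
`M* ⊗_A U ∈ add V` and `M ⊗_B V ∈ add U`.  Then `add (M ⊗_B V) = add U` and
`add (M* ⊗_A U) = add V`. -/
theorem add_balancedTensor_eq_of_separableEquivalence
    (k : Type) [Field k]
    (A : Type) [Ring A] [Algebra k A] [FiniteDimensional k A]
    (B : Type) [Ring B] [Algebra k B] [FiniteDimensional k B]
    (hA : IsSymmetricKAlgebra k A) (hB : IsSymmetricKAlgebra k B)
    -- `M` is an `A`-`B`-bimodule, finitely generated projective on either side
    (M : Type) [AddCommGroup M] [Module k M] [Module A M] [Module Bᵐᵒᵖ M]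
    [IsScalarTower k A M] [IsScalarTower k Bᵐᵒᵖ M] [SMulCommClass A Bᵐᵒᵖ M]
    (hMfinA : Module.Finite A M) (hMprojA : Module.Projective A M)
    (hMfinB : Module.Finite Bᵐᵒᵖ M) (hMprojB : Module.Projective Bᵐᵒᵖ M)
    -- `A` is a direct summand of `M ⊗_B M*` as an `A`-`A`-bimodule
    (hsepA : ∃ (f : A →ₗ[A] BalancedTensor k B A M (M →ₗ[k] k))
       (g : BalancedTensor k B A M (M →ₗ[k] k) →ₗ[A] A),
         (∀ (x a : A), f (x * a) = op a • f x) ∧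
         (∀ (t : BalancedTensor k B A M (M →ₗ[k] k)) (a : A), g (op a • t) = g t * a) ∧
         g.comp f = LinearMap.id)
    -- `B` is a direct summand of `M* ⊗_A M` as a `B`-`B`-bimodule
    (hsepB : ∃ (f : B →ₗ[B] BalancedTensor k A B (M →ₗ[k] k) M)
       (g : BalancedTensor k A B (M →ₗ[k] k) M →ₗ[B] B),
         (∀ (x b : B), f (x * b) = op b • f x) ∧
         (∀ (t : BalancedTensor k A B (M →ₗ[k] k) M) (b : B), g (op b • t) = g t * b) ∧
         g.comp f = LinearMap.id)
    -- `U` is a finitely generated `A`-module with `A` as a direct summand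
    (U : Type) [AddCommGroup U] [Module k U] [Module A U] [IsScalarTower k A U]
    (hUfin : Module.Finite A U)
    -- `V` is a finitely generated `B`-module with `B` as a direct summand
    (V : Type) [AddCommGroup V] [Module k V] [Module B V] [IsScalarTower k B V]
    (hVfin : Module.Finite B V)
    -- `M* ⊗_A U ∈ add V` and `M ⊗_B V ∈ add U`
    (hMU : MemAdd B (BalancedTensor k A B (M →ₗ[k] k) U) V)
    (hMV : MemAdd A (BalancedTensor k B A M V) U) :
    (∀ (X : Type) [AddCommGroup X] [Module A X],
        MemAdd A X (BalancedTensor k B A M V) ↔ MemAdd A X U) ∧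
    (∀ (X : Type) [AddCommGroup X] [Module B X],
        MemAdd B X (BalancedTensor k A B (M →ₗ[k] k) U) ↔ MemAdd B X V) :=
  add_balancedTensor_eq_of_separableEquivalence_general k A B M hsepA hsepB U V hMU hMV
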